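/- Let G be a linearly ordered abelian group, n ∈ ℕ, a ∈ G, and C ⊆ G a convex subgroup. Then H_{n,a} ⊆ C if and only if a ∈ G^{[n]}_C + nG. -/

import Mathlib

open Pointwise

/-- The set `nG = {n·g : g ∈ G}`. -/
def NG (G : Type*) [AddCommGroup G] (n : ℕ) : Set G :=
  {x : G | ∃ g : G, n • g = x}

/-- `H` is a convex subgroup of the linearly ordered abelian group `G`. -/
def IsConvexSubgroup {G : Type*} [AddCommGroup G] [LinearOrder G] [IsOrderedAddMonoid G] (H : Set G) : Prop :=
  (0 : G) ∈ H ∧ (∀ x ∈ H, ∀ y ∈ H, x + y ∈ H) ∧ (∀ x ∈ H, -x ∈ H) ∧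
    ∀ a ∈ H, ∀ b : G, 0 ≤ b → b ≤ a → b ∈ H

/-- `H_{n,a}`: the largest convex subgroup `H` with `a ∉ H + nG` (it is the union of
all such subgroups), and `{0}` if `a ∈ nG` (in which case the union is empty). -/
def Hna {G : Type*} [AddCommGroup G] [LinearOrder G] [IsOrderedAddMonoid G] (n : ℕ) (a : G) : Set G :=
  {0} ∪ ⋃₀ {H : Set G | IsConvexSubgroup H ∧ a ∉ H + NG G n}

/-- `H'_{n,b} = ⋃ {H_{n,a} : a ∈ G, b ∉ H_{n,a}}`, with `{0}` for the empty union. -/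
def Hnb' {G : Type*} [AddCommGroup G] [LinearOrder G] [IsOrderedAddMonoid G] (n : ℕ) (b : G) : Set G :=
  {0} ∪ ⋃₀ {H : Set G | ∃ a : G, H = Hna n a ∧ b ∉ Hna n a}

/-- `G^{[n]}_C = ⋂ {H + nG : H convex subgroup, H ⊋ C}`, with `G` for the empty
intersection. -/
def Gbr {G : Type*} [AddCommGroup G] [LinearOrder G] [IsOrderedAddMonoid G] (C : Set G) (n : ℕ) : Set G :=
  ⋂₀ {S : Set G | ∃ H : Set G, IsConvexSubgroup H ∧ C ⊂ H ∧ S = H + NG G n}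

/- The sets `H + nG`, for `H` a convex subgroup strictly above `C`, form a chain that is
decreasing in `H` and stable under translation by `nG`. Hence `a ∈ G^{[n]}_C + nG` iff
`a ∈ H + nG` for every convex `H ⊋ C`: to move a decomposition `a = h + n•g` found in one
member of the chain into a smaller one, translate back by `n•g`. Since convex subgroups are
comparable, the latter condition says that every convex `H` with `a ∉ H + nG` lies in `C`,
i.e. `H_{n,a} ⊆ C`. -/

section NG

variable {G : Type*} [AddCommGroup G] {S : Set G} {n : ℕ}

lemma mem_add_NG {a : G} : a ∈ S + NG G n ↔ ∃ s ∈ S, ∃ g : G, a = s + n • g := by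
  constructor
  · rintro ⟨s, hs, _, ⟨g, rfl⟩, rfl⟩
    exact ⟨s, hs, g, rfl⟩
  · rintro ⟨s, hs, g, rfl⟩
    exact ⟨s, hs, n • g, ⟨g, rfl⟩, rfl⟩

lemma add_nsmul_mem_add_NG_iff {x g : G} : x + n • g ∈ S + NG G n ↔ x ∈ S + NG G n := by
  simp only [mem_add_NG]
  constructor
  · rintro ⟨s, hs, g', hx⟩
    exact ⟨s, hs, g' - g, by rw [smul_sub, ← add_sub_assoc, ← hx, add_sub_cancel_right]⟩
  · rintro ⟨s, hs, g', rfl⟩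
    exact ⟨s, hs, g' + g, by rw [smul_add, add_assoc]⟩

end NG

namespace IsConvexSubgroup

variable {G : Type*} [AddCommGroup G] [LinearOrder G] [IsOrderedAddMonoid G] {H K : Set G}

lemma abs_mem_iff (hH : IsConvexSubgroup H) {x : G} : |x| ∈ H ↔ x ∈ H := by
  have neg_mem_iff : ∀ y, -y ∈ H ↔ y ∈ H := fun y =>
    ⟨fun h => neg_neg y ▸ hH.2.2.1 _ h, hH.2.2.1 y⟩
  rcases abs_choice x with h | h <;> rw [h]
  exact neg_mem_iff x

lemma mem_of_abs_le (hH : IsConvexSubgroup H) {x y : G} (hx : x ∈ H) (hyx : |y| ≤ |x|) :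
    y ∈ H :=
  hH.abs_mem_iff.mp (hH.2.2.2 _ (hH.abs_mem_iff.mpr hx) _ (abs_nonneg y) hyx)

lemma subset_or_subset (hH : IsConvexSubgroup H) (hK : IsConvexSubgroup K) :
    H ⊆ K ∨ K ⊆ H := by
  refine or_iff_not_imp_left.mpr fun hHK k hk => ?_
  obtain ⟨h, hhH, hhK⟩ := Set.not_subset.mp hHK
  rcases le_total |k| |h| with hkh | hhk
  · exact hH.mem_of_abs_le hhH hkh
  · exact absurd (hK.mem_of_abs_le hk hhk) hhK

end IsConvexSubgroup

section Gbr

variable {G : Type*} [AddCommGroup G] [LinearOrder G] [IsOrderedAddMonoid G] {n : ℕ} {a : G}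

lemma mem_Gbr_add_NG_iff {C : Set G} :
    a ∈ Gbr C n + NG G n ↔ ∀ H, IsConvexSubgroup H → C ⊂ H → a ∈ H + NG G n := by
  constructor
  · rintro ⟨x, hx, _, ⟨g, rfl⟩, rfl⟩ H hH hCH
    exact add_nsmul_mem_add_NG_iff.mpr (hx _ ⟨H, hH, hCH, rfl⟩)
  · intro hall
    by_cases hex : ∃ H₀, IsConvexSubgroup H₀ ∧ C ⊂ H₀
    · obtain ⟨H₀, hH₀, hCH₀⟩ := hex
      obtain ⟨h, hh, g, rfl⟩ := mem_add_NG.mp (hall H₀ hH₀ hCH₀)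
      refine mem_add_NG.mpr ⟨h, ?_, g, rfl⟩
      rintro _ ⟨H, hH, hCH, rfl⟩
      rcases hH₀.subset_or_subset hH with hH₀H | hHH₀
      · exact mem_add_NG.mpr ⟨h, hH₀H hh, 0, by rw [smul_zero, add_zero]⟩
      · exact add_nsmul_mem_add_NG_iff.mp (hall H hH hCH)
    · have hGbr : a ∈ Gbr C n := by
        rintro _ ⟨H, hH, hCH, rfl⟩
        exact absurd ⟨H, hH, hCH⟩ hex
      exact mem_add_NG.mpr ⟨a, hGbr, 0, by rw [smul_zero, add_zero]⟩

lemma Hna_subset_iff {C : Set G} (hC : IsConvexSubgroup C) :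
    Hna n a ⊆ C ↔ ∀ H, IsConvexSubgroup H → C ⊂ H → a ∈ H + NG G n := by
  constructor
  · intro hsub H hH hCH
    by_contra hna
    exact hCH.not_subset fun x hx => hsub (Or.inr ⟨H, ⟨hH, hna⟩, hx⟩)
  · rintro hall x (hx | ⟨H, ⟨hH, hna⟩, hxH⟩)
    · exact (Set.mem_singleton_iff.mp hx) ▸ hC.1
    · by_cases hHC : H ⊆ C
      · exact hHC hxH
      · exact absurd (hall H hH ⟨(hC.subset_or_subset hH).resolve_right hHC, hHC⟩) hna

end Gbr

theorem Hna_subset_iff_mem_Gbr_add_general {G : Type*} [AddCommGroup G] [LinearOrder G] [IsOrderedAddMonoid G]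
    (n : ℕ) (a : G) (C : Set G) (hC : IsConvexSubgroup C) :
    Hna n a ⊆ C ↔ a ∈ Gbr C n + NG G n := by
  rw [mem_Gbr_add_NG_iff]
  exact Hna_subset_iff hC

/-- For a convex subgroup `C`, positive `n`, and `a ∈ G`:
`H_{n,a} ⊆ C ↔ a ∈ G^{[n]}_C + nG`. -/
theorem Hna_subset_iff_mem_Gbr_add {G : Type*} [AddCommGroup G] [LinearOrder G] [IsOrderedAddMonoid G]
    (n : ℕ) (hn : 0 < n) (a : G) (C : Set G) (hC : IsConvexSubgroup C) :
    Hna n a ⊆ C ↔ a ∈ Gbr C n + NG G n :=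
  Hna_subset_iff_mem_Gbr_add_general n a C hC
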